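/- Let A ⊆ ℝ^T be a compact Max-Plus convex set. For μ ∈ IA define β_A(μ) ∈ ℝ^T by pr_t(β_A(μ)) = μ(pr_t|_A) for each t ∈ T. Then β_A(μ) ∈ A for every idempotent measure μ on A, and the idempotent barycenter map β_A: IA → A is continuous. -/

import Mathlib

open Topology

noncomputable section

def IsIdempotentMeasure {Z : Type*} [TopologicalSpace Z] (μ : C(Z, ℝ) → ℝ) : Prop :=
  μ 1 = 1 ∧ (∀ (c : ℝ) (φ : C(Z, ℝ)), μ (ContinuousMap.const Z c + φ) = c + μ φ) ∧
    ∀ φ ψ : C(Z, ℝ), μ (φ ⊔ ψ) = max (μ φ) (μ ψ)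

abbrev IM (Z : Type*) [TopologicalSpace Z] : Type _ :=
  {μ : C(Z, ℝ) → ℝ // IsIdempotentMeasure μ}

def density {Z : Type*} [TopologicalSpace Z] (μ : C(Z, ℝ) → ℝ) (z : Z) : EReal :=
  ⨅ φ : {φ : C(Z, ℝ) // φ ≤ 0 ∧ φ z = 0}, ((μ φ.1 : ℝ) : EReal)

def pushforward {X Y : Type*} [TopologicalSpace X] [TopologicalSpace Y]
    (f : C(X, Y)) (μ : C(X, ℝ) → ℝ) : C(Y, ℝ) → ℝ :=
  fun ψ => μ (ψ.comp f)

def mpComb {τ : Type*} (α : EReal) (a b : τ → ℝ) : τ → ℝ :=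
  fun t => ((α + (a t : EReal)) ⊔ ((b t : ℝ) : EReal)).toReal

def MaxPlusConvex {τ : Type*} (A : Set (τ → ℝ)) : Prop :=
  ∀ a ∈ A, ∀ b ∈ A, ∀ α : EReal, α ≤ 0 → mpComb α a b ∈ A

def projCM {T : Type*} (A : Set (T → ℝ)) (t : T) : C(A, ℝ) :=
  ⟨fun a => a.1 t, (continuous_apply t).comp continuous_subtype_val⟩

def tilde {Z : Type*} [TopologicalSpace Z] (φ : C(Z, ℝ)) : C(IM Z, ℝ) :=
  ⟨fun ν => ν.1 φ, (continuous_apply φ).comp continuous_subtype_val⟩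

/-! The barycenter map is continuous since each coordinate is evaluation of `μ` at a fixed
function. As `A` is closed, for `β_A(μ) ∈ A` it suffices to approximate `β_A(μ)` within `ε` on
finitely many coordinates `F`. Cover `A` by finitely many `ε`-balls around points `a_j` for the
sup-distance `d` on `F`, and put `χ_j = min 0 (ε - d(·, a_j))`. Then `⨁_j χ_j = 0`, so the weights
`λ_j = μ(χ_j)` satisfy `⨁_j λ_j = 0`, and by Max-Plus convexity `⨁_j λ_j ⊙ a_j ∈ A`. For `t ∈ F`
the function `⨁_j (pr_t(a_j) + χ_j)` is uniformly `ε`-close to `pr_t`, and `μ` is `1`-Lipschitz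
for the sup norm, so `pr_t(⨁_j λ_j ⊙ a_j)` is `ε`-close to `μ(pr_t)`. -/

namespace IsIdempotentMeasure

variable {Z : Type*} [TopologicalSpace Z] {μ : C(Z, ℝ) → ℝ}

lemma map_zero (hμ : IsIdempotentMeasure μ) : μ 0 = 0 := by
  have h := hμ.2.1 1 0
  rwa [add_zero, ContinuousMap.const_one, hμ.1, left_eq_add] at h

lemma mono (hμ : IsIdempotentMeasure μ) : Monotone μ := fun φ ψ h => by
  rw [← sup_eq_right.2 h, hμ.2.2]
  exact le_max_left _ _

lemma map_finset_sup' (hμ : IsIdempotentMeasure μ) {ι : Type*} {J : Finset ι}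
    (hJ : J.Nonempty) (φ : ι → C(Z, ℝ)) : μ (J.sup' hJ φ) = J.sup' hJ (fun j => μ (φ j)) := by
  induction hJ using Finset.Nonempty.cons_induction with
  | singleton j => simp
  | cons j s hjs hs ih => rw [Finset.sup'_cons hs, Finset.sup'_cons hs, hμ.2.2, ih]

lemma nonempty (hμ : IsIdempotentMeasure μ) : Nonempty Z := by
  by_contra hZ
  have h1 : (1 : C(Z, ℝ)) = 0 := ContinuousMap.ext fun z => (hZ ⟨z⟩).elim
  simpa [h1, hμ.map_zero] using hμ.1

lemma abs_map_sub_le (hμ : IsIdempotentMeasure μ) {φ ψ : C(Z, ℝ)} {ε : ℝ}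
    (h : ∀ z, |φ z - ψ z| ≤ ε) : |μ φ - μ ψ| ≤ ε := by
  have hle : ∀ {φ ψ : C(Z, ℝ)}, (∀ z, |φ z - ψ z| ≤ ε) → μ φ ≤ ε + μ ψ := fun {φ ψ} h => by
    rw [← hμ.2.1]
    refine hμ.mono fun z => ?_
    change φ z ≤ ε + ψ z
    linarith [le_abs_self (φ z - ψ z), h z]
  rw [abs_sub_le_iff]
  constructor
  · linarith [hle h]
  · linarith [hle fun z => abs_sub_comm (φ z) (ψ z) ▸ h z]

end IsIdempotentMeasure

lemma mpComb_coe {τ : Type*} (l : ℝ) (a b : τ → ℝ) :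
    mpComb (l : EReal) a b = fun t => max (l + a t) (b t) := by
  funext t
  rw [mpComb, ← EReal.coe_add, ← EReal.coe_strictMono.monotone.map_max, EReal.toReal_coe]

namespace MaxPlusConvex

variable {τ : Type*} {A : Set (τ → ℝ)}

lemma max_add_mem (hA : MaxPlusConvex A) {l : ℝ} (hl : l ≤ 0) {a b : τ → ℝ} (ha : a ∈ A)
    (hb : b ∈ A) : (fun t => max (l + a t) (b t)) ∈ A :=
  mpComb_coe l a b ▸ hA a ha b hb l (EReal.coe_nonpos.2 hl)

lemma max_finset_sup'_add_mem (hA : MaxPlusConvex A) {ι : Type*} {J : Finset ι}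
    (hJ : J.Nonempty) {w : ι → ℝ} {p : ι → τ → ℝ} (hw : ∀ j ∈ J, w j ≤ 0)
    (hp : ∀ j ∈ J, p j ∈ A) {b : τ → ℝ} (hb : b ∈ A) :
    (fun t => max (J.sup' hJ (fun j => w j + p j t)) (b t)) ∈ A := by
  induction hJ using Finset.Nonempty.cons_induction with
  | singleton j => simpa using hA.max_add_mem (hw j (by simp)) (hp j (by simp)) hb
  | cons j s hjs hs ih =>
    simp only [Finset.sup'_cons hs, max_assoc]
    exact hA.max_add_mem (hw j (by simp)) (hp j (by simp))
      (ih (fun i hi => hw i (by simp [hi])) (fun i hi => hp i (by simp [hi])))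

lemma finset_sup'_add_mem (hA : MaxPlusConvex A) {ι : Type*} {J : Finset ι}
    (hJ : J.Nonempty) {w : ι → ℝ} (hw : J.sup' hJ w = 0) {p : ι → τ → ℝ}
    (hp : ∀ j ∈ J, p j ∈ A) : (fun t => J.sup' hJ (fun j => w j + p j t)) ∈ A := by
  obtain ⟨j₀, hj₀, hwj₀⟩ := Finset.exists_mem_eq_sup' hJ w
  have hw_nonpos : ∀ j ∈ J, w j ≤ 0 := fun j hj => hw ▸ Finset.le_sup' w hj
  convert hA.max_finset_sup'_add_mem hJ hw_nonpos hp (hp j₀ hj₀) using 2 with t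
  have h₀ := Finset.le_sup' (fun j => w j + p j t) hj₀
  rw [← hwj₀, hw, zero_add] at h₀
  exact (max_eq_left h₀).symm

end MaxPlusConvex

lemma abs_finset_sup'_add_sub_le {ι : Type*} {J : Finset ι} (hJ : J.Nonempty) {f g : ι → ℝ}
    {y ε : ℝ} (hg : J.sup' hJ g = 0) (h : ∀ j ∈ J, g j + |f j - y| ≤ ε) :
    |J.sup' hJ (fun j => f j + g j) - y| ≤ ε := by
  obtain ⟨j₀, hj₀, hgj₀⟩ := Finset.exists_mem_eq_sup' hJ g
  rw [abs_sub_le_iff]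
  constructor
  · have : J.sup' hJ (fun j => f j + g j) ≤ y + ε :=
      Finset.sup'_le hJ _ fun j hj => by linarith [le_abs_self (f j - y), h j hj]
    linarith
  · have h₀ := Finset.le_sup' (fun j => f j + g j) hj₀
    have := h j₀ hj₀
    rw [← hgj₀, hg] at h₀ this
    linarith [neg_abs_le (f j₀ - y)]

lemma exists_finset_sup'_eq_zero_add_dist_le {X E : Type*} [TopologicalSpace X]
    [CompactSpace X] [Nonempty X] [PseudoMetricSpace E] {Φ : X → E} (hΦ : Continuous Φ)
    {ε : ℝ} (hε : 0 < ε) :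
    ∃ (J : Finset X) (hJ : J.Nonempty) (χ : X → C(X, ℝ)),
      J.sup' hJ χ = 0 ∧ ∀ a x, χ a x + dist (Φ x) (Φ a) ≤ ε := by
  obtain ⟨J, hJ⟩ := isCompact_univ.elim_finite_subcover (fun a => {x | dist (Φ x) (Φ a) < ε})
    (fun a => isOpen_lt (hΦ.dist continuous_const) continuous_const)
    (fun a _ => Set.mem_iUnion.2 ⟨a, by simpa using hε⟩)
  have hcover : ∀ x, ∃ a ∈ J, dist (Φ x) (Φ a) < ε := fun x => by
    simpa using hJ (Set.mem_univ x)
  have hJne : J.Nonempty := let ⟨a, ha, _⟩ := hcover (Classical.arbitrary X); ⟨a, ha⟩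
  refine ⟨J, hJne, fun a => ⟨fun x => min 0 (ε - dist (Φ x) (Φ a)), by fun_prop⟩, ?_,
    fun a x => by
      simp only [ContinuousMap.coe_mk]
      linarith [min_le_right 0 (ε - dist (Φ x) (Φ a))]⟩
  ext x
  rw [ContinuousMap.sup'_apply, ContinuousMap.zero_apply]
  obtain ⟨a, ha, hxa⟩ := hcover x
  refine le_antisymm (Finset.sup'_le _ _ fun _ _ => min_le_left _ _) ?_
  have hχa : min 0 (ε - dist (Φ x) (Φ a)) = 0 := min_eq_left (by linarith)
  exact hχa.symm.le.trans (Finset.le_sup' (fun b => min 0 (ε - dist (Φ x) (Φ b))) ha)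

lemma IsIdempotentMeasure.exists_finset_sup'_approx {X ι : Type*} [TopologicalSpace X]
    [CompactSpace X] [Fintype ι] {μ : C(X, ℝ) → ℝ} (hμ : IsIdempotentMeasure μ)
    (φ : ι → C(X, ℝ)) {ε : ℝ} (hε : 0 < ε) :
    ∃ (J : Finset X) (hJ : J.Nonempty) (w : X → ℝ), J.sup' hJ w = 0 ∧
      ∀ i, |J.sup' hJ (fun a => w a + φ i a) - μ (φ i)| ≤ ε := by
  have := hμ.nonempty
  obtain ⟨J, hJ, χ, hχ, hχ_dist⟩ := exists_finset_sup'_eq_zero_add_dist_le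
    (continuous_pi fun i => (φ i).continuous) hε
  refine ⟨J, hJ, fun a => μ (χ a), by rw [← hμ.map_finset_sup', hχ, hμ.map_zero], fun i => ?_⟩
  have hS : μ (J.sup' hJ fun a => .const X (φ i a) + χ a) =
      J.sup' hJ (fun a => μ (χ a) + φ i a) := by
    rw [hμ.map_finset_sup']
    exact Finset.sup'_congr hJ rfl fun a _ => by rw [hμ.2.1, add_comm]
  rw [← hS]
  refine hμ.abs_map_sub_le fun x => ?_
  rw [ContinuousMap.sup'_apply]
  have hχx : J.sup' hJ (fun a => χ a x) = 0 := by
    rw [← ContinuousMap.sup'_apply, hχ, ContinuousMap.zero_apply]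
  refine abs_finset_sup'_add_sub_le hJ hχx fun a _ => ?_
  calc χ a x + |φ i a - φ i x| ≤ χ a x + dist (fun i => φ i x) (fun i => φ i a) := by
        gcongr
        rw [← Real.dist_eq, dist_comm]
        exact dist_le_pi_dist (fun i => φ i x) (fun i => φ i a) i
    _ ≤ ε := hχ_dist a x

lemma IsClosed.mem_of_forall_finset_approx {T : Type*} {A : Set (T → ℝ)} (hA : IsClosed A)
    {b : T → ℝ} (h : ∀ (F : Finset T) (ε : ℝ), 0 < ε → ∃ a ∈ A, ∀ t ∈ F, |a t - b t| ≤ ε) :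
    b ∈ A := by
  refine hA.closure_subset (mem_closure_iff_nhds.2 fun U hU => ?_)
  obtain ⟨F, V, hV, hFV⟩ := Filter.mem_pi'.1 (nhds_pi (a := b) ▸ hU)
  have hsmall : ∀ᶠ ε in 𝓝[>] (0 : ℝ), ∀ t ∈ F, Metric.closedBall (b t) ε ⊆ V t :=
    nhdsWithin_le_nhds ((Filter.eventually_all_finset F).2 fun t _ =>
      eventually_closedBall_subset (hV t))
  obtain ⟨ε, hεV, hε⟩ := (hsmall.and self_mem_nhdsWithin).exists
  obtain ⟨a, haA, ha⟩ := h F ε hε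
  exact ⟨a, hFV fun t ht => hεV t ht (Metric.mem_closedBall.2 (ha t ht)), haA⟩

lemma MaxPlusConvex.exists_mem_forall_abs_sub_le {T : Type*} {A : Set (T → ℝ)}
    (hA : IsCompact A) (hconv : MaxPlusConvex A) {μ : C(A, ℝ) → ℝ} (hμ : IsIdempotentMeasure μ)
    (F : Finset T) {ε : ℝ} (hε : 0 < ε) :
    ∃ a ∈ A, ∀ t ∈ F, |a t - μ (projCM A t)| ≤ ε := by
  have := isCompact_iff_compactSpace.1 hA
  obtain ⟨J, hJ, w, hw, hJw⟩ := hμ.exists_finset_sup'_approx (fun t : F => projCM A t) hε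
  exact ⟨_, hconv.finset_sup'_add_mem hJ hw fun a _ => a.2, fun t ht => hJw ⟨t, ht⟩⟩

theorem idempotent_barycenter_wellDefined {T : Type*} (A : Set (T → ℝ))
    (hA : IsCompact A) (hconv : MaxPlusConvex A) :
    (∀ μ : C(A, ℝ) → ℝ, IsIdempotentMeasure μ → (fun t => μ (projCM A t)) ∈ A) ∧
    Continuous (fun μ : IM A => fun t => μ.1 (projCM A t)) :=
  ⟨fun _ hμ => hA.isClosed.mem_of_forall_finset_approx fun F _ hε =>
      hconv.exists_mem_forall_abs_sub_le hA hμ F hε,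
    continuous_pi fun t => (continuous_apply (projCM A t)).comp continuous_subtype_val⟩
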